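/- Let α₀,α₁,α₂,α₃,α₄ be real parameters with α₃ = α₄. Let I ⊆ (0,1) be an open interval containing 1/2 that is symmetric under t ↦ 1−t, and let y, z : I → ℝ be differentiable functions solving the Hamiltonian system (9) with y(1/2) = 1/2 and z(1/2) = 0. Then for all t ∈ I: y(1−t) = 1 − y(t) and z(1−t) = −z(t); i.e., (y,z) is a symmetric solution of the Bäcklund transformation σ₁. -/

import Mathlib

/-!
The Bäcklund transformation `σ₁ : (t, y, z) ↦ (1 - t, 1 - y, -z)` maps solutions of (9) to
solutions of (9) with `α₃` and `α₄` exchanged, so for `α₃ = α₄` it maps the solution `(y, z)` to a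
second solution on the symmetric interval `I`. Both take the value `(1/2, 0)` at the fixed point
`t = 1/2`, and since (9) is regular on `(0, 1)`, local uniqueness of solutions together with the
connectedness of `I` forces them to coincide.
-/

/-- `(y, z)` is a (differentiable) real solution of the Hamiltonian system (9) with
parameters `(a0, a1, a2, a3, a4)` on the set `I ⊆ ℝ`. -/
def IsRealHamSol (a0 a1 a2 a3 a4 : ℝ) (I : Set ℝ) (y z : ℝ → ℝ) : Prop :=
  ∀ t ∈ I, DifferentiableAt ℝ y t ∧ DifferentiableAt ℝ z t ∧
    t * (t - 1) * deriv y t =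
      2 * y t * (y t - 1) * (y t - t) * z t - (a0 - 1) * y t * (y t - 1)
        - a3 * y t * (y t - t) - a4 * (y t - 1) * (y t - t) ∧
    t * (t - 1) * deriv z t =
      -(y t * (y t - 1) + (y t - 1) * (y t - t) + y t * (y t - t)) * z t ^ 2
        + ((2 * y t - 1) * (a0 - 1) + (2 * y t - t) * a3 + (2 * y t - t - 1) * a4) * z t
        - (a1 + a2) * a2

open Set Filter Topology

theorem ODE_solution_unique_of_isPreconnected {E : Type*} [NormedAddCommGroup E]
    [NormedSpace ℝ E] {v : E → E} {f g : ℝ → E} {U : Set ℝ} {t₀ : ℝ}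
    (hU : IsOpen U) (hUc : IsPreconnected U)
    (hv : ∀ t ∈ U, ∃ K, ∃ s ∈ 𝓝 (f t), LipschitzOnWith K v s)
    (hf : ∀ t ∈ U, HasDerivAt f (v (f t)) t) (hg : ∀ t ∈ U, HasDerivAt g (v (g t)) t)
    (ht₀ : t₀ ∈ U) (heq : f t₀ = g t₀) : EqOn f g U := by
  have hagree_open : IsOpen (U ∩ {t | f t = g t}) := by
    refine isOpen_iff_mem_nhds.mpr fun t ⟨ht, hfg⟩ => ?_
    obtain ⟨K, s, hs, hlip⟩ := hv t ht
    have hfs : ∀ᶠ u in 𝓝 t, HasDerivAt f (v (f u)) u ∧ f u ∈ s :=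
      (hU.eventually_mem ht).mono hf |>.and
        ((hf t ht).continuousAt.preimage_mem_nhds hs)
    have hgs : ∀ᶠ u in 𝓝 t, HasDerivAt g (v (g u)) u ∧ g u ∈ s :=
      (hU.eventually_mem ht).mono hg |>.and
        ((hg t ht).continuousAt.preimage_mem_nhds (hfg ▸ hs))
    have hlocal : f =ᶠ[𝓝 t] g :=
      ODE_solution_unique_of_eventually (v := fun _ => v) (s := fun _ => s)
        (.of_forall fun _ => hlip) hfs hgs hfg
    exact inter_mem (hU.mem_nhds ht) hlocal
  have hdisagree_open : IsOpen (U ∩ (fun t => (f t, g t)) ⁻¹' (diagonal E)ᶜ) :=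
    ContinuousOn.isOpen_inter_preimage
      (fun t ht => ((hf t ht).continuousAt.prodMk (hg t ht).continuousAt).continuousWithinAt)
      hU isClosed_diagonal.isOpen_compl
  have hU_sub := hUc.subset_left_of_subset_union hagree_open hdisagree_open
    (disjoint_left.mpr fun _ h₁ h₂ => h₂.2 h₁.2)
    (fun t ht => (em (f t = g t)).imp (⟨ht, ·⟩) (⟨ht, ·⟩)) ⟨t₀, ht₀, ht₀, heq⟩
  exact fun t ht => (hU_sub ht).2

section Hamiltonian

variable {a0 a1 a2 a3 a4 : ℝ} {I : Set ℝ} {y z : ℝ → ℝ}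

def hamiltonY (a0 a3 a4 t y z : ℝ) : ℝ :=
  2 * y * (y - 1) * (y - t) * z - (a0 - 1) * y * (y - 1) - a3 * y * (y - t)
    - a4 * (y - 1) * (y - t)

def hamiltonZ (a0 a1 a2 a3 a4 t y z : ℝ) : ℝ :=
  -(y * (y - 1) + (y - 1) * (y - t) + y * (y - t)) * z ^ 2
    + ((2 * y - 1) * (a0 - 1) + (2 * y - t) * a3 + (2 * y - t - 1) * a4) * z
    - (a1 + a2) * a2

theorem isRealHamSol_iff : IsRealHamSol a0 a1 a2 a3 a4 I y z ↔
    ∀ t ∈ I, DifferentiableAt ℝ y t ∧ DifferentiableAt ℝ z t ∧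
      t * (t - 1) * deriv y t = hamiltonY a0 a3 a4 t (y t) (z t) ∧
      t * (t - 1) * deriv z t = hamiltonZ a0 a1 a2 a3 a4 t (y t) (z t) :=
  Iff.rfl

theorem hamiltonY_sigma1 (a0 a3 a4 t y z : ℝ) :
    hamiltonY a0 a3 a4 (1 - t) (1 - y) (-z) = hamiltonY a0 a4 a3 t y z := by
  unfold hamiltonY; ring

theorem hamiltonZ_sigma1 (a0 a1 a2 a3 a4 t y z : ℝ) :
    hamiltonZ a0 a1 a2 a3 a4 (1 - t) (1 - y) (-z) = hamiltonZ a0 a1 a2 a4 a3 t y z := by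
  unfold hamiltonZ; ring

theorem IsRealHamSol.sigma1 (h : IsRealHamSol a0 a1 a2 a3 a4 I y z) :
    IsRealHamSol a0 a1 a2 a4 a3 ((1 - ·) ⁻¹' I) (fun t => 1 - y (1 - t))
      (fun t => -z (1 - t)) := by
  rw [isRealHamSol_iff] at h ⊢
  intro t ht
  obtain ⟨hy, hz, hy', hz'⟩ := h (1 - t) ht
  have hY : HasDerivAt (fun t => 1 - y (1 - t)) (deriv y (1 - t)) t := by
    simpa using (hy.hasDerivAt.comp_const_sub 1 t).const_sub 1
  have hZ : HasDerivAt (fun t => -z (1 - t)) (deriv z (1 - t)) t := by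
    simpa using (hz.hasDerivAt.comp_const_sub 1 t).fun_neg
  refine ⟨hY.differentiableAt, hZ.differentiableAt, ?_, ?_⟩
  · rw [hY.deriv, ← hamiltonY_sigma1, sub_sub_cancel, neg_neg, ← hy']; ring
  · rw [hZ.deriv, ← hamiltonZ_sigma1, sub_sub_cancel, neg_neg, ← hz']; ring

/-- The system (9) made autonomous by adjoining `t' = 1`, which makes it locally Lipschitz
away from the singular times `t = 0, 1`. -/
noncomputable def hamiltonField (a0 a1 a2 a3 a4 : ℝ) (x : ℝ × ℝ × ℝ) : ℝ × ℝ × ℝ :=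
  (1, hamiltonY a0 a3 a4 x.1 x.2.1 x.2.2 / (x.1 * (x.1 - 1)),
    hamiltonZ a0 a1 a2 a3 a4 x.1 x.2.1 x.2.2 / (x.1 * (x.1 - 1)))

theorem hamiltonField_contDiffAt {x : ℝ × ℝ × ℝ} (hx : x.1 * (x.1 - 1) ≠ 0) :
    ContDiffAt ℝ 1 (hamiltonField a0 a1 a2 a3 a4) x := by
  unfold hamiltonField hamiltonY hamiltonZ
  fun_prop (disch := assumption)

theorem IsRealHamSol.hasDerivAt_graph (h : IsRealHamSol a0 a1 a2 a3 a4 I y z) {t : ℝ}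
    (ht : t ∈ I) (hsing : t * (t - 1) ≠ 0) :
    HasDerivAt (fun t => (t, y t, z t)) (hamiltonField a0 a1 a2 a3 a4 (t, y t, z t)) t := by
  rw [isRealHamSol_iff] at h
  obtain ⟨hy, hz, hy', hz'⟩ := h t ht
  have hY := hy.hasDerivAt
  have hZ := hz.hasDerivAt
  rw [eq_div_of_mul_eq hsing ((mul_comm _ _).trans hy')] at hY
  rw [eq_div_of_mul_eq hsing ((mul_comm _ _).trans hz')] at hZ
  exact (hasDerivAt_id t).prodMk (hY.prodMk hZ)

theorem IsRealHamSol.eqOn_of_eq {y₂ z₂ : ℝ → ℝ} {t₀ : ℝ}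
    (h : IsRealHamSol a0 a1 a2 a3 a4 I y z) (h₂ : IsRealHamSol a0 a1 a2 a3 a4 I y₂ z₂)
    (hI : IsOpen I) (hIc : IsPreconnected I) (h0 : (0 : ℝ) ∉ I) (h1 : (1 : ℝ) ∉ I)
    (ht₀ : t₀ ∈ I) (hy : y t₀ = y₂ t₀) (hz : z t₀ = z₂ t₀) :
    EqOn y y₂ I ∧ EqOn z z₂ I := by
  have hsing : ∀ t ∈ I, t * (t - 1) ≠ 0 := fun t ht =>
    mul_ne_zero (ne_of_mem_of_not_mem ht h0) (sub_ne_zero.mpr (ne_of_mem_of_not_mem ht h1))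
  have hgraph := ODE_solution_unique_of_isPreconnected hI hIc
    (fun t ht => (hamiltonField_contDiffAt (hsing t ht)).exists_lipschitzOnWith)
    (fun t ht => h.hasDerivAt_graph ht (hsing t ht))
    (fun t ht => h₂.hasDerivAt_graph ht (hsing t ht)) ht₀ (by simp [hy, hz])
  exact ⟨fun t ht => congrArg (·.2.1) (hgraph ht), fun t ht => congrArg (·.2.2) (hgraph ht)⟩

end Hamiltonian

/-- **Symmetric solution of σ₁.** Let `α₃ = α₄`, let `I ⊆ (0,1)` be an open interval
containing `1/2`, symmetric under `t ↦ 1 - t`, and let `(y, z)` solve the Hamiltonian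
system (9) on `I` with `y(1/2) = 1/2`, `z(1/2) = 0`. Then `y(1-t) = 1 - y(t)` and
`z(1-t) = -z(t)` for all `t ∈ I`: the solution is a symmetric solution of σ₁. -/
theorem symmetric_solution_sigma1 (a0 a1 a2 a3 a4 : ℝ) (h34 : a3 = a4)
    (I : Set ℝ) (hIopen : IsOpen I) (hIconn : I.OrdConnected)
    (hIsub : I ⊆ Set.Ioo (0 : ℝ) 1) (hhalf : (1 / 2 : ℝ) ∈ I)
    (hIsymm : ∀ t ∈ I, 1 - t ∈ I)
    (y z : ℝ → ℝ)
    (hyz : IsRealHamSol a0 a1 a2 a3 a4 I y z)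
    (hy0 : y (1 / 2) = 1 / 2) (hz0 : z (1 / 2) = 0) :
    ∀ t ∈ I, y (1 - t) = 1 - y t ∧ z (1 - t) = -z t := by
  subst h34
  have hσ : IsRealHamSol a0 a1 a2 a3 a3 I (fun t => 1 - y (1 - t)) (fun t => -z (1 - t)) :=
    fun t ht => hyz.sigma1 t (hIsymm t ht)
  obtain ⟨hy, hz⟩ := hyz.eqOn_of_eq hσ hIopen hIconn.isPreconnected
    (fun h => (hIsub h).1.false) (fun h => (hIsub h).2.false) hhalf
    (by norm_num [hy0]) (by norm_num [hz0])
  exact fun t ht => ⟨by linarith [hy ht], by linarith [hz ht]⟩
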